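/- arXiv:2210.04611 — 3 statements merged into one kernel-verified Lean document; each statement's English description precedes it below -/
import Mathlib

section
/- Let Q be a medial quandle and q ∈ Q. Then Fix(q) = {d ∈ Dis(Q) : d(q) = q} is a subgroup of Dis(Q) that is closed under the Λ-scalar multiplication of Dis(Q) and is annihilated by 1−t; that is, Fix(q) is a Λ-submodule of Dis(Q) with t·d = d for every d ∈ Fix(q). -/
open LaurentPolynomial

set_option synthInstance.maxHeartbeats 1000000
set_option maxHeartbeats 1000000

noncomputable section

/-- The ring `Λ = ℤ[t,t⁻¹]` of Laurent polynomials with integer coefficients. -/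
abbrev Λ : Type := LaurentPolynomial ℤ

/-- The variable `t ∈ Λ`. -/
abbrev tL : Λ := T 1

/-- A medial quandle structure on a type `Q`: an idempotent binary operation whose right
translations are bijections, satisfying the medial law. -/
structure MedialQuandleStr (Q : Type*) where
  op : Q → Q → Q
  idem : ∀ x, op x x = x
  bij : ∀ y, Function.Bijective fun x => op x y
  medial : ∀ w x y z, op (op w x) (op y z) = op (op w y) (op x z)

/-- A quandle structure on a type `T`. -/
structure QuandleStr (T : Type*) where
  op : T → T → T
  idem : ∀ x, op x x = x
  bij : ∀ y, Function.Bijective fun x => op x y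
  distrib : ∀ x y z, op (op x y) z = op (op x z) (op y z)

namespace MedialQuandleStr

variable {Q : Type*} (s : MedialQuandleStr Q)

/-- The translation `β_y : x ↦ x ▷ y`, as a permutation of `Q`. -/
def β (y : Q) : Equiv.Perm Q := Equiv.ofBijective _ (s.bij y)

/-- `β(Q)`: the subgroup of permutations generated by the translations. -/
def transGroup : Subgroup (Equiv.Perm Q) := Subgroup.closure (Set.range s.β)

/-- The displacement group `Dis(Q)`, generated by the elementary displacements
`β_y β_z⁻¹`. -/
def Dis : Subgroup (Equiv.Perm Q) :=
  Subgroup.closure {d : Equiv.Perm Q | ∃ y z, d = s.β y * (s.β z)⁻¹}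

/-- The orbit of `q`: the smallest subset of `Q` containing `q` and closed under the
action of `β(Q)`. -/
def orbit (q : Q) : Set Q := {x | ∃ g ∈ s.transGroup, g q = x}

end MedialQuandleStr

section Construction

variable {M : Type*} [AddCommGroup M] [Module Λ M] {I : Type*}

/-- The carrier of the quandle `Q(N,(m_i),(X_i))`: the disjoint union of the quotients
`Q_i = N/X_i`. -/
def QCar (N : Submodule Λ M) (X : I → Submodule Λ ↥N) : Type _ :=
  Σ i : I, ↥N ⧸ X i

/-- The condition `(1-t)·X_i = 0` for all `i`. -/
def annCond (N : Submodule Λ M) (X : I → Submodule Λ ↥N) : Prop :=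
  ∀ i, ∀ x ∈ X i, (1 - tL) • (x : ↥N) = 0

/-- Multiplication by `1-t`, descended from `N/X_j` to `N` (well defined since
`(1-t)·X_j = 0`). -/
def oneSubT (N : Submodule Λ M) {X : I → Submodule Λ ↥N} (h : annCond N X) (j : I) :
    (↥N ⧸ X j) →ₗ[Λ] ↥N :=
  Submodule.liftQ (X j) ((1 - tL) • (LinearMap.id : ↥N →ₗ[Λ] ↥N))
    (fun x hx => by simpa using h j x hx)

/-- The operation of `Q(N,(m_i),(X_i))`: for `x ∈ Q_i` and `y ∈ Q_j`,
`x ▷ y = m_j - m_i + t·x + (1-t)·y + X_i ∈ Q_i`. -/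
def qop (N : Submodule Λ M) (m : I → M) {X : I → Submodule Λ ↥N}
    (hm : ∀ i j, m i - m j ∈ N) (h : annCond N X) :
    QCar N X → QCar N X → QCar N X :=
  fun x y =>
    ⟨x.1, Submodule.Quotient.mk (⟨m y.1 - m x.1, hm y.1 x.1⟩ : ↥N)
        + tL • x.2 + Submodule.Quotient.mk (oneSubT N h y.1 y.2)⟩

end Construction

/-
A displacement `d` fixing `q` is an automorphism of `Q`, so it conjugates `β_q` to
`β_{d q} = β_q`, i.e. it commutes with `β_q`. Mediality makes `β_y β_z⁻¹ β_x` symmetric in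
`x` and `y`, which forces `Dis(Q)` to be abelian, so `d` also commutes with `β_{q'} β_q⁻¹`,
and hence with `β_{q'} = (β_{q'} β_q⁻¹) β_q` for every `q'`.
-/

namespace MedialQuandleStr

variable {Q : Type*} (s : MedialQuandleStr Q)

@[simp]
lemma β_apply (y x : Q) : s.β y x = s.op x y := rfl

lemma op_op_right_distrib (x y z : Q) : s.op (s.op x y) z = s.op (s.op x z) (s.op y z) := by
  conv_lhs => rw [← s.idem z]
  exact s.medial x y z z

def autGroup : Subgroup (Equiv.Perm Q) where
  carrier := {f | ∀ x y, f (s.op x y) = s.op (f x) (f y)}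
  one_mem' _ _ := rfl
  mul_mem' {f g} hf hg x y := by simp only [Equiv.Perm.mul_apply, hg x y, hf (g x) (g y)]
  inv_mem' {f} hf x y := by
    apply f.injective
    rw [hf (f⁻¹ x) (f⁻¹ y)]
    simp

variable {s}

lemma mul_β_mul_inv_of_mem_autGroup {f : Equiv.Perm Q} (hf : f ∈ s.autGroup) (x : Q) :
    f * s.β x * f⁻¹ = s.β (f x) := by
  ext w
  simp only [Equiv.Perm.mul_apply, β_apply, hf (f⁻¹ w) x]
  simp

variable (s)

lemma β_mem_autGroup (y : Q) : s.β y ∈ s.autGroup :=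
  fun x z => s.op_op_right_distrib x z y

lemma Dis_le_autGroup : s.Dis ≤ s.autGroup := by
  rw [Dis, Subgroup.closure_le]
  rintro _ ⟨y, z, rfl⟩
  exact mul_mem (s.β_mem_autGroup y) (inv_mem (s.β_mem_autGroup z))

lemma β_op_mul_β (x y z : Q) : s.β (s.op y z) * s.β x = s.β (s.op x z) * s.β y := by
  ext w
  exact s.medial w x y z

lemma β_mul_inv_mul_β_comm (x y z : Q) :
    s.β y * (s.β z)⁻¹ * s.β x = s.β x * (s.β z)⁻¹ * s.β y := by
  have h : s.β (s.β z y) * s.β x = s.β (s.β z x) * s.β y := s.β_op_mul_β x y z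
  rw [← mul_β_mul_inv_of_mem_autGroup (s.β_mem_autGroup z),
    ← mul_β_mul_inv_of_mem_autGroup (s.β_mem_autGroup z)] at h
  simpa only [mul_assoc, mul_right_inj] using h

lemma commute_β_mul_inv (x y z : Q) :
    Commute (s.β x * (s.β z)⁻¹) (s.β y * (s.β z)⁻¹) := by
  change _ * _ = _ * _
  simp only [← mul_assoc, s.β_mul_inv_mul_β_comm y x z]

lemma isMulCommutative_Dis : IsMulCommutative s.Dis := by
  refine Subgroup.isMulCommutative_closure ?_
  rintro _ ⟨y, z, rfl⟩ _ ⟨u, v, rfl⟩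
  have huv : s.β u * (s.β v)⁻¹ = (s.β u * (s.β z)⁻¹) * (s.β v * (s.β z)⁻¹)⁻¹ := by group
  rw [huv]
  exact ((s.commute_β_mul_inv y u z).mul_right (s.commute_β_mul_inv y v z).inv_right).eq

lemma commute_of_mem_Dis {a b : Equiv.Perm Q} (ha : a ∈ s.Dis) (hb : b ∈ s.Dis) :
    Commute a b :=
  have := s.isMulCommutative_Dis
  setLike_mul_comm ha hb

lemma commute_β_of_mem_Dis_of_apply_eq {d : Equiv.Perm Q} (hd : d ∈ s.Dis) {q : Q}
    (hq : d q = q) (q' : Q) : Commute (s.β q') d := by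
  have hβq : Commute (s.β q) d := by
    have h := mul_β_mul_inv_of_mem_autGroup (s.Dis_le_autGroup hd) q
    rw [hq, mul_inv_eq_iff_eq_mul] at h
    exact h.symm
  have hdisp : Commute (s.β q' * (s.β q)⁻¹) d :=
    s.commute_of_mem_Dis (Subgroup.subset_closure ⟨q', q, rfl⟩) hd
  simpa only [inv_mul_cancel_right] using hdisp.mul_left hβq

end MedialQuandleStr

/-- For a medial quandle `Q` and `q ∈ Q`, the set
`Fix(q) = {d ∈ Dis(Q) : d(q) = q}` is a subgroup of `Dis(Q)` which is closed under the
`Λ`-scalar multiplication of `Dis(Q)` (given by `t·d = β_{q*} d β_{q*}⁻¹`) and is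
annihilated by `1 - t`: indeed `t·d = d` for every `d ∈ Fix(q)`. -/
theorem stmt5 {Q : Type*} (s : MedialQuandleStr Q) (q : Q)
    (F : Set (Equiv.Perm Q)) (hF : F = {d : Equiv.Perm Q | d ∈ s.Dis ∧ d q = q}) :
    (1 : Equiv.Perm Q) ∈ F ∧
    (∀ d ∈ F, d⁻¹ ∈ F) ∧
    (∀ d ∈ F, ∀ d' ∈ F, d * d' ∈ F) ∧
    (∀ d ∈ F, ∀ q' : Q, s.β q' * d * (s.β q')⁻¹ = d) := by
  have hFix : F = (s.Dis ⊓ MulAction.stabilizer (Equiv.Perm Q) q : Subgroup _) := hF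
  rw [hFix]
  exact ⟨one_mem _, fun _ => inv_mem, fun _ hd _ hd' => mul_mem hd hd',
    fun _ hd q' => (s.commute_β_of_mem_Dis_of_apply_eq hd.1 hd.2 q').mul_inv_cancel⟩
end
end

section
/- Let Q = Q(N,(m_i),(X_i)) be the quandle of the construction, let N′ be the set of n ∈ N such that d(x) = x + n + X_i (for all i ∈ I, x ∈ Q_i) defines a displacement of Q, and let N″ be the Λ-submodule of N generated by (⋂_{i ∈ I} X_i) ∪ (1−t)·N ∪ {m_j − m_k : j, k ∈ I}. Then N″ = N′, and the kernel of the surjective Λ-linear map N′ → Dis(Q), n ↦ d_n, is exactly ⋂_{i ∈ I} X_i. -/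
open LaurentPolynomial

set_option synthInstance.maxHeartbeats 1000000
set_option maxHeartbeats 1000000

noncomputable section

/-!
For `y = a + X_j` and `z = b + X_k` the `t·x`-terms of `x ▷ y` and `x ▷ z` cancel, so the
elementary displacement `β_y β_z⁻¹` is the translation `d_n` by
`n = m_j - m_k + (1-t)·a - (1-t)·b`. Translations compose additively, hence every displacement
is a `d_n` with `n ∈ N''`. Conversely each generator of `N''` is such an `n` (take `j = k` and
`b = 0`, or `a = b = 0`) or lies in `⋂ X_i`, where `d_n = 1`. Since `d_n = d_{n'}` iff
`n - n' ∈ ⋂ X_i ⊆ N''`, this identifies `N'` with `N''` and the kernel of `n ↦ d_n` with `⋂ X_i`.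
-/

section Displacements

variable {M : Type*} [AddCommGroup M] [Module Λ M] {I : Type*}
  (N : Submodule Λ M) (m : I → M) (X : I → Submodule Λ ↥N)
  (hm : ∀ i j, m i - m j ∈ N) (h : annCond N X)

def dispGens : Set ↥N :=
  (⋂ i : I, (X i : Set ↥N))
    ∪ Set.range (fun a : ↥N => (1 - tL) • a)
    ∪ {v : ↥N | ∃ j k : I, v = ⟨m j - m k, hm j k⟩}

/-- The translation `d_n` of the paper. -/
def shift (n : ↥N) : Equiv.Perm (QCar N X) :=
  Equiv.sigmaCongrRight fun _ => Equiv.addRight (Submodule.Quotient.mk n)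

theorem shift_apply (n : ↥N) (i : I) (x : ↥N ⧸ X i) :
    shift N X n ⟨i, x⟩ = ⟨i, x + Submodule.Quotient.mk n⟩ := rfl

theorem eq_shift_iff {d : Equiv.Perm (QCar N X)} {n : ↥N} :
    d = shift N X n ↔ ∀ (i : I) (x : ↥N ⧸ X i), d ⟨i, x⟩ = ⟨i, x + Submodule.Quotient.mk n⟩ :=
  ⟨fun hd i x => by rw [hd, shift_apply], fun hd => Equiv.ext fun ⟨i, x⟩ => hd i x⟩

theorem shift_add (a b : ↥N) : shift N X (a + b) = shift N X a * shift N X b := by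
  refine Equiv.ext fun ⟨i, x⟩ => congrArg (Sigma.mk i) ?_
  change x + Submodule.Quotient.mk (a + b) = x + Submodule.Quotient.mk b + Submodule.Quotient.mk a
  rw [add_comm a, Submodule.Quotient.mk_add, add_assoc]

theorem shift_zero : shift N X 0 = 1 :=
  ((eq_shift_iff N X).2 fun i x => by rw [Submodule.Quotient.mk_zero, add_zero]; rfl).symm

theorem shift_neg (a : ↥N) : shift N X (-a) = (shift N X a)⁻¹ :=
  eq_inv_of_mul_eq_one_left <| by rw [← shift_add, neg_add_cancel, shift_zero]

theorem shift_eq_one_iff {n : ↥N} : shift N X n = 1 ↔ n ∈ ⋂ i, (X i : Set ↥N) := by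
  simp only [Set.mem_iInter, SetLike.mem_coe, ← Submodule.Quotient.mk_eq_zero]
  refine ⟨fun hn i => ?_, fun hn => ((eq_shift_iff N X).2 fun i x => ?_).symm⟩
  · have hi : (⟨i, Submodule.Quotient.mk n⟩ : QCar N X) = ⟨i, 0⟩ := by
      rw [← zero_add (Submodule.Quotient.mk n), ← shift_apply, hn]; rfl
    exact eq_of_heq (Sigma.mk.inj_iff.1 hi).2
  · rw [hn, add_zero]; rfl

theorem shift_eq_shift_iff {a b : ↥N} :
    shift N X a = shift N X b ↔ a - b ∈ ⋂ i, (X i : Set ↥N) := by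
  rw [← shift_eq_one_iff, sub_eq_add_neg, shift_add, shift_neg, mul_inv_eq_one]

def elemDisp (y z : QCar N X) : ↥N :=
  ⟨m y.1 - m z.1, hm y.1 z.1⟩ + oneSubT N h y.1 y.2 - oneSubT N h z.1 z.2

theorem oneSubT_mk (j : I) (a : ↥N) :
    oneSubT N h j (Submodule.Quotient.mk a) = (1 - tL) • a := rfl

theorem qop_mk (i : I) (x : ↥N ⧸ X i) (y : QCar N X) :
    qop N m hm h ⟨i, x⟩ y = ⟨i, Submodule.Quotient.mk (⟨m y.1 - m i, hm y.1 i⟩ : ↥N) + tL • x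
      + Submodule.Quotient.mk (oneSubT N h y.1 y.2)⟩ := rfl

theorem elemDisp_mem_span (y z : QCar N X) :
    elemDisp N m X hm h y z ∈ Submodule.span Λ (dispGens N m X hm) := by
  have one_sub_t_mem : ∀ (j : I) (q : ↥N ⧸ X j),
      oneSubT N h j q ∈ Submodule.span Λ (dispGens N m X hm) := fun j q => by
    obtain ⟨a, rfl⟩ := Submodule.Quotient.mk_surjective _ q
    exact Submodule.subset_span (Or.inl (Or.inr ⟨a, rfl⟩))
  exact sub_mem (add_mem (Submodule.subset_span (Or.inr ⟨y.1, z.1, rfl⟩))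
    (one_sub_t_mem y.1 y.2)) (one_sub_t_mem z.1 z.2)

variable (s : MedialQuandleStr (QCar N X)) (hs : s.op = qop N m hm h)
include hs

theorem β_eq_shift_mul_β (y z : QCar N X) :
    s.β y = shift N X (elemDisp N m X hm h y z) * s.β z := by
  refine Equiv.ext fun ⟨i, x⟩ => ?_
  change s.op ⟨i, x⟩ y = shift N X _ (s.op ⟨i, x⟩ z)
  rw [hs, qop_mk, qop_mk, shift_apply]
  have hmi : (⟨m y.1 - m i, hm y.1 i⟩ : ↥N)
      = ⟨m z.1 - m i, hm z.1 i⟩ + ⟨m y.1 - m z.1, hm y.1 z.1⟩ := Subtype.ext (by simp)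
  refine congrArg (Sigma.mk i) ?_
  simp only [elemDisp, hmi, Submodule.Quotient.mk_add, Submodule.Quotient.mk_sub]
  abel

theorem β_mul_β_inv (y z : QCar N X) :
    s.β y * (s.β z)⁻¹ = shift N X (elemDisp N m X hm h y z) := by
  rw [β_eq_shift_mul_β N m X hm h s hs y z, mul_inv_cancel_right]

theorem exists_mem_span_shift_eq_of_mem_Dis {d : Equiv.Perm (QCar N X)} (hd : d ∈ s.Dis) :
    ∃ n ∈ Submodule.span Λ (dispGens N m X hm), shift N X n = d := by
  induction hd using Subgroup.closure_induction with
  | mem _ hd =>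
    obtain ⟨y, z, rfl⟩ := hd
    exact ⟨_, elemDisp_mem_span N m X hm h y z, (β_mul_β_inv N m X hm h s hs y z).symm⟩
  | one => exact ⟨0, zero_mem _, shift_zero N X⟩
  | mul _ _ _ _ ha hb =>
    obtain ⟨a, ha, rfl⟩ := ha
    obtain ⟨b, hb, rfl⟩ := hb
    exact ⟨a + b, add_mem ha hb, shift_add N X a b⟩
  | inv _ _ ha =>
    obtain ⟨a, ha, rfl⟩ := ha
    exact ⟨-a, neg_mem ha, shift_neg N X a⟩

theorem mem_span_dispGens_of_shift_mem_Dis {n : ↥N} (hn : shift N X n ∈ s.Dis) :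
    n ∈ Submodule.span Λ (dispGens N m X hm) := by
  obtain ⟨n', hn', hshift⟩ := exists_mem_span_shift_eq_of_mem_Dis N m X hm h s hs hn
  have hdiff : n - n' ∈ Submodule.span Λ (dispGens N m X hm) :=
    Submodule.subset_span (Or.inl (Or.inl ((shift_eq_shift_iff N X).1 hshift.symm)))
  simpa using add_mem hn' hdiff

theorem shift_mem_Dis_of_mem_dispGens [Nonempty I] {n : ↥N} (hn : n ∈ dispGens N m X hm) :
    shift N X n ∈ s.Dis := by
  have elem_mem : ∀ y z, shift N X (elemDisp N m X hm h y z) ∈ s.Dis := fun y z => by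
    rw [← β_mul_β_inv N m X hm h s hs]
    exact Subgroup.subset_closure ⟨y, z, rfl⟩
  rcases hn with (hn | ⟨a, rfl⟩) | ⟨j, k, rfl⟩
  · rw [(shift_eq_one_iff N X).2 hn]
    exact one_mem _
  · obtain ⟨i⟩ := ‹Nonempty I›
    convert elem_mem ⟨i, Submodule.Quotient.mk a⟩ ⟨i, 0⟩ using 2
    ext
    simp [elemDisp, oneSubT_mk]
  · convert elem_mem ⟨j, 0⟩ ⟨k, 0⟩ using 2
    ext
    simp [elemDisp]

end Displacements

/-- Let `Q = Q(N,(m_i),(X_i))` (with medial quandle structure `s`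
whose operation is `qop`), and let `P = N'` be the submodule of those `n ∈ N` for which
`d_n : x ↦ x + n + X_i` is a displacement of `Q`. Then `N'` equals the `Λ`-submodule
`N''` of `N` generated by `(⋂ i, X_i) ∪ (1-t)·N ∪ {m_j - m_k}`, and the kernel of the
surjection `n ↦ d_n` is exactly `⋂ i, X_i`. -/
theorem stmt14 {M : Type*} [AddCommGroup M] [Module Λ M] {I : Type*} [Nonempty I]
    (N : Submodule Λ M) (m : I → M) (X : I → Submodule Λ ↥N)
    (hm : ∀ i j, m i - m j ∈ N) (h : annCond N X)
    (s : MedialQuandleStr (QCar N X)) (hs : s.op = qop N m hm h)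
    (P : Submodule Λ ↥N)
    (hP : ∀ n : ↥N,
      n ∈ P ↔ ∃ d ∈ s.Dis, ∀ (i : I) (x : ↥N ⧸ X i),
        d ⟨i, x⟩ = ⟨i, x + Submodule.Quotient.mk n⟩) :
    Submodule.span Λ ((⋂ i : I, (X i : Set ↥N))
        ∪ Set.range (fun a : ↥N => (1 - tL) • a)
        ∪ {v : ↥N | ∃ j k : I, v = ⟨m j - m k, hm j k⟩}) = P ∧
    (∀ n ∈ P, ∀ d ∈ s.Dis,
      (∀ (i : I) (x : ↥N ⧸ X i), d ⟨i, x⟩ = ⟨i, x + Submodule.Quotient.mk n⟩) →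
      (d = 1 ↔ n ∈ ⋂ i : I, (X i : Set ↥N))) := by
  have mem_P_iff : ∀ n, n ∈ P ↔ shift N X n ∈ s.Dis := fun n => by
    simp only [hP, ← eq_shift_iff, exists_eq_right]
  refine ⟨le_antisymm ?_ fun n hn => ?_, fun n _ d _ hdn => ?_⟩
  · exact Submodule.span_le.2 fun n hn =>
      (mem_P_iff n).2 (shift_mem_Dis_of_mem_dispGens N m X hm h s hs hn)
  · exact mem_span_dispGens_of_shift_mem_Dis N m X hm h s hs ((mem_P_iff n).1 hn)
  · rw [(eq_shift_iff N X).2 hdn, shift_eq_one_iff]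
end
end

section
/- Let Q = Q(N,(m_i),(X_i)) be the quandle of the construction, let S be the subgroup of N generated by (1−t²)·N ∪ {(1+t)·(m_j − m_i) : i, j ∈ I}, and suppose S is a Λ-submodule of N. Let π: M → M/S be the canonical quotient map. Then Q′ := Q(N/S, (π(m_i)), (π(X_i))) is a well-defined instance of the construction (with ambient module M/S), Q′ is an involutory medial quandle, the map p: Q → Q′ sending x + X_i ∈ Q_i to π(x) + π(X_i) ∈ Q′_i is a surjective quandle homomorphism, and every quandle homomorphism g from Q to an involutory quandle factors through p (there is a quandle homomorphism g′: Q′ → target with g = g′ ∘ p); consequently Q′ is isomorphic to the involutory quotient Q_inv of Q. -/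
open LaurentPolynomial

set_option synthInstance.maxHeartbeats 1000000
set_option maxHeartbeats 1000000

noncomputable section

/-!
For `a ∈ Q_i` and `b ∈ Q_j` one has `(a ▷ b) ▷ b = t²a + (1 + t)(m_j - m_i) + (1 - t²)b`. In `Q'`
the scalar `1 - t²` kills `N'` and `(1 + t)(m'_j - m'_i) = 0`, so `Q'` is involutory.
Conversely, let `g` be a homomorphism into an involutory quandle. Then `g (t²a + u) = g a` on `Q_i`
for every `u = (1 + t)(m_j - m_i) + (1 - t²)b`, and in particular (`u = 0`) `g (t²a) = g a`. As `t²`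
is invertible, each such `u` is a period of `g` on `Q_i`. These `u` generate `S`, the kernel of
`N → N'`, so `g` is constant on the fibres of `Q → Q'` and descends to `Q'`.
-/

theorem Function.Surjective.exists_map_op_eq_op_of_factorsThrough {α β γ : Type*}
    {opα : α → α → α} {opβ : β → β → β} {opγ : γ → γ → γ} {p : α → β} (hp : p.Surjective)
    (hpop : ∀ x y, p (opα x y) = opβ (p x) (p y)) {g : α → γ}
    (hg : ∀ x y, g (opα x y) = opγ (g x) (g y)) (hgp : g.FactorsThrough p) :
    ∃ g' : β → γ, (∀ x y, g' (opβ x y) = opγ (g' x) (g' y)) ∧ ∀ x, g x = g' (p x) := by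
  have hfac : ∀ x, g (Function.surjInv hp (p x)) = g x :=
    fun x => hgp (Function.surjInv_eq hp (p x))
  refine ⟨g ∘ Function.surjInv hp, hp.forall₂.mpr fun x y => ?_, fun x => (hfac x).symm⟩
  simp only [Function.comp_apply, ← hpop, hfac, hg]

section QuotientByMap

variable {R M M₂ : Type*} [Ring R] [AddCommGroup M] [Module R M] [AddCommGroup M₂] [Module R M₂]
  {N : Submodule R M}

theorem Submodule.mk_sub_self (x : M) (hx : x - x ∈ N) : (⟨x - x, hx⟩ : N) = 0 :=
  Subtype.ext (sub_self x)

theorem LinearMap.surjective_of_coe_apply_eq {f : M →ₗ[R] M₂} {r : N →ₗ[R] N.map f}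
    (hr : ∀ a, (r a : M₂) = f a) : Function.Surjective r := by
  rintro ⟨_, a, ha, rfl⟩
  exact ⟨⟨a, ha⟩, Subtype.ext (hr _)⟩

theorem LinearMap.eq_zero_iff_of_coe_apply_eq_mkQ {S : Submodule R N}
    {N' : Submodule R (M ⧸ S.map N.subtype)} {r : N →ₗ[R] N'}
    (hr : ∀ a, (r a : M ⧸ S.map N.subtype) = (S.map N.subtype).mkQ a) (a : N) :
    r a = 0 ↔ a ∈ S := by
  rw [← Submodule.coe_eq_zero, hr, Submodule.mkQ_apply, Submodule.Quotient.mk_eq_zero]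
  simp

end QuotientByMap

theorem tL_mul_T_neg_one : tL * T (-1) = 1 := by
  rw [← T_add]; simp

theorem tL_sq_mul_T_neg_two : tL ^ 2 * T (-2) = 1 := by
  rw [T_pow, ← T_add]; simp

section Construction

variable {M : Type*} [AddCommGroup M] [Module Λ M] {I : Type*}

-- `QCar` is a plain `def`, so `⟨i, q⟩ : QCar N X` elaborates to a bare `Sigma.mk` and `rw` fails
-- under `g : QCar N X → α`; this named constructor avoids that.
def QCar.mk {N : Submodule Λ M} {X : I → Submodule Λ ↥N} (i : I) (a : ↥N) : QCar N X :=
  ⟨i, Submodule.Quotient.mk a⟩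

theorem QCar.exists_mk {N : Submodule Λ M} {X : I → Submodule Λ ↥N} (x : QCar N X) :
    ∃ i a, x = QCar.mk i a := by
  obtain ⟨i, q⟩ := x
  obtain ⟨a, rfl⟩ := Submodule.Quotient.mk_surjective _ q
  exact ⟨i, a, rfl⟩

theorem QCar.mk_eq_mk_iff {N : Submodule Λ M} {X : I → Submodule Λ ↥N} {i j : I} {a b : ↥N} :
    (QCar.mk i a : QCar N X) = QCar.mk j b ↔ i = j ∧ a - b ∈ X j := by
  refine Sigma.mk.inj_iff.trans ⟨?_, ?_⟩
  · rintro ⟨rfl, hq⟩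
    exact ⟨rfl, (Submodule.Quotient.eq _).mp (eq_of_heq hq)⟩
  · rintro ⟨rfl, hab⟩
    exact ⟨rfl, heq_of_eq ((Submodule.Quotient.eq _).mpr hab)⟩

theorem annCond_map {N : Submodule Λ M} {X : I → Submodule Λ ↥N} (h : annCond N X)
    {M' : Type*} [AddCommGroup M'] [Module Λ M'] {N' : Submodule Λ M'} (r : N →ₗ[Λ] N') :
    annCond N' fun i => (X i).map r := by
  rintro i _ ⟨x, hx, rfl⟩
  rw [← map_smul, h i x hx, map_zero]

variable (N : Submodule Λ M) (m : I → M) {X : I → Submodule Λ ↥N}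
  (hm : ∀ i j, m i - m j ∈ N) (h : annCond N X)

theorem qop_mk_s18 (i j : I) (a b : ↥N) :
    qop N m hm h (QCar.mk i a) (QCar.mk j b) =
      QCar.mk i ((⟨m j - m i, hm j i⟩ : ↥N) + tL • a + (1 - tL) • b) := by
  unfold qop QCar.mk
  refine Sigma.ext rfl (heq_of_eq ?_)
  dsimp only
  rw [oneSubT, Submodule.liftQ_apply]
  simp [Submodule.Quotient.mk_add, Submodule.Quotient.mk_smul]

theorem qop_self (x : QCar N X) : qop N m hm h x x = x := by
  obtain ⟨i, a, rfl⟩ := x.exists_mk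
  rw [qop_mk_s18, Submodule.mk_sub_self, zero_add]
  congr 1
  module

theorem qop_left_bijective (y : QCar N X) : Function.Bijective fun x => qop N m hm h x y := by
  obtain ⟨j, b, rfl⟩ := y.exists_mk
  constructor
  · intro x x' hxx'
    obtain ⟨i, a, rfl⟩ := x.exists_mk
    obtain ⟨i', a', rfl⟩ := x'.exists_mk
    obtain ⟨rfl, hmem⟩ := QCar.mk_eq_mk_iff.mp (by simpa only [qop_mk_s18] using hxx')
    have ht : tL • (a - a') ∈ X i := by
      convert hmem using 1
      module
    have := (X i).smul_mem (T (-1) : Λ) ht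
    rw [smul_smul, mul_comm, tL_mul_T_neg_one, one_smul] at this
    exact QCar.mk_eq_mk_iff.mpr ⟨rfl, this⟩
  · intro x
    obtain ⟨i, c, rfl⟩ := x.exists_mk
    refine ⟨QCar.mk i ((T (-1) : Λ) • (c - ⟨m j - m i, hm j i⟩ - (1 - tL) • b)), ?_⟩
    dsimp only
    rw [qop_mk_s18, smul_smul, tL_mul_T_neg_one, one_smul]
    congr 1
    abel

theorem qop_qop_qop_comm (w x y z : QCar N X) :
    qop N m hm h (qop N m hm h w x) (qop N m hm h y z) =
      qop N m hm h (qop N m hm h w y) (qop N m hm h x z) := by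
  obtain ⟨iw, w, rfl⟩ := w.exists_mk
  obtain ⟨ix, x, rfl⟩ := x.exists_mk
  obtain ⟨iy, y, rfl⟩ := y.exists_mk
  obtain ⟨iz, z, rfl⟩ := z.exists_mk
  simp only [qop_mk_s18]
  congr 1
  ext
  push_cast
  module

theorem qop_qop_mk (i j : I) (a b : ↥N) :
    qop N m hm h (qop N m hm h (QCar.mk i a) (QCar.mk j b)) (QCar.mk j b) =
      QCar.mk i ((1 + tL) • (⟨m j - m i, hm j i⟩ : ↥N) + tL ^ 2 • a + (1 - tL ^ 2) • b) := by
  rw [qop_mk_s18, qop_mk_s18]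
  congr 1
  module

theorem qop_qop_right_of_smul_eq_zero (hsq : ∀ c : ↥N, (1 - tL ^ 2) • c = 0)
    (hdiff : ∀ i j, (1 + tL) • (⟨m j - m i, hm j i⟩ : ↥N) = 0) (x y : QCar N X) :
    qop N m hm h (qop N m hm h x y) y = x := by
  obtain ⟨i, a, rfl⟩ := x.exists_mk
  obtain ⟨j, b, rfl⟩ := y.exists_mk
  have ha : tL ^ 2 • a = a := by
    have e : tL ^ 2 • a + (1 - tL ^ 2) • a = a := by module
    rwa [hsq, add_zero] at e
  rw [qop_qop_mk, hdiff, hsq, ha, zero_add, add_zero]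

def QCar.periodSubgroup {α : Type*} (g : QCar N X → α) (i : I) : AddSubgroup ↥N where
  carrier := {s | ∀ c, g (QCar.mk i (c + s)) = g (QCar.mk i c)}
  zero_mem' c := by rw [add_zero]
  add_mem' {s s'} hs hs' c := by rw [← add_assoc, hs', hs]
  neg_mem' {s} hs c := by
    conv_rhs => rw [← neg_add_cancel_right c s]
    exact (hs _).symm

def involutorySubgroup : AddSubgroup ↥N :=
  AddSubgroup.closure (Set.range (fun a : ↥N => (1 - tL ^ 2) • a)
    ∪ {v : ↥N | ∃ i j : I, v = (1 + tL) • (⟨m j - m i, hm j i⟩ : ↥N)})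

variable {N m hm h} {α : Type*} {op : α → α → α} (hinv : ∀ a b, op (op a b) b = a)
  {g : QCar N X → α} (hg : ∀ x y, g (qop N m hm h x y) = op (g x) (g y))
include hinv hg

theorem add_smul_mem_periodSubgroup (i j : I) (b : ↥N) :
    (1 + tL) • (⟨m j - m i, hm j i⟩ : ↥N) + (1 - tL ^ 2) • b ∈ QCar.periodSubgroup N g i := by
  have hgg : ∀ x y, g (qop N m hm h (qop N m hm h x y) y) = g x := fun x y => by
    rw [hg, hg, hinv]
  intro c
  obtain ⟨a, rfl⟩ : ∃ a, c = tL ^ 2 • a :=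
    ⟨(T (-2) : Λ) • c, by rw [smul_smul, tL_sq_mul_T_neg_two, one_smul]⟩
  have key := hgg (QCar.mk i a) (QCar.mk j b)
  have key₀ := hgg (QCar.mk i a) (QCar.mk i 0)
  rw [qop_qop_mk] at key key₀
  rw [Submodule.mk_sub_self, smul_zero, smul_zero, zero_add, add_zero] at key₀
  rw [key₀, ← key]
  congr 2
  abel

theorem involutorySubgroup_le_periodSubgroup (i : I) :
    involutorySubgroup N m hm ≤ QCar.periodSubgroup N g i := by
  have hmem := add_smul_mem_periodSubgroup hinv hg i
  refine (AddSubgroup.closure_le _).mpr (Set.union_subset ?_ ?_)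
  · rintro _ ⟨b, rfl⟩
    simpa only [Submodule.mk_sub_self, smul_zero, zero_add, SetLike.mem_coe] using hmem i b
  · rintro _ ⟨j, k, rfl⟩
    have e : (1 + tL) • (⟨m k - m j, hm k j⟩ : ↥N)
        = (1 + tL) • ⟨m k - m i, hm k i⟩ - (1 + tL) • ⟨m j - m i, hm j i⟩ := by
      ext
      push_cast
      module
    have hk := hmem k 0
    have hj := hmem j 0
    simp only [smul_zero, add_zero] at hk hj
    rw [SetLike.mem_coe, e]
    exact sub_mem hk hj

end Construction

section Map

variable {M M' : Type*} [AddCommGroup M] [Module Λ M] [AddCommGroup M'] [Module Λ M'] {I : Type*}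
  {N : Submodule Λ M} {N' : Submodule Λ M'} {X : I → Submodule Λ ↥N} {X' : I → Submodule Λ ↥N'}

def QCar.map (r : N →ₗ[Λ] N') (hX : ∀ i, X i ≤ (X' i).comap r) (x : QCar N X) : QCar N' X' :=
  ⟨x.1, Submodule.mapQ (X x.1) (X' x.1) r (hX x.1) x.2⟩

variable {r : N →ₗ[Λ] N'} (hX : ∀ i, X i ≤ (X' i).comap r)

theorem QCar.map_mk (i : I) (a : ↥N) : QCar.map r hX (QCar.mk i a) = QCar.mk i (r a) := rfl

theorem QCar.map_surjective (hr : Function.Surjective r) :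
    Function.Surjective (QCar.map r hX) := by
  intro x
  obtain ⟨i, c, rfl⟩ := x.exists_mk
  obtain ⟨a, rfl⟩ := hr c
  exact ⟨QCar.mk i a, rfl⟩

theorem QCar.map_qop {m : I → M} {m' : I → M'} {hm : ∀ i j, m i - m j ∈ N}
    {hm' : ∀ i j, m' i - m' j ∈ N'} (h : annCond N X) (h' : annCond N' X')
    (hrm : ∀ i j, r ⟨m j - m i, hm j i⟩ = ⟨m' j - m' i, hm' j i⟩) (x y : QCar N X) :
    QCar.map r hX (qop N m hm h x y) = qop N' m' hm' h' (QCar.map r hX x) (QCar.map r hX y) := by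
  obtain ⟨i, a, rfl⟩ := x.exists_mk
  obtain ⟨j, b, rfl⟩ := y.exists_mk
  rw [qop_mk_s18, QCar.map_mk, QCar.map_mk, QCar.map_mk, qop_mk_s18, map_add, map_add, map_smul,
    map_smul, hrm]

theorem QCar.factorsThrough_map {α : Type*} {g : QCar N X → α}
    (hker : ∀ i s, r s = 0 → s ∈ QCar.periodSubgroup N g i) :
    g.FactorsThrough (QCar.map r fun i => Submodule.le_comap_map r (X i)) := by
  intro x y hxy
  obtain ⟨i, a, rfl⟩ := x.exists_mk
  obtain ⟨j, b, rfl⟩ := y.exists_mk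
  rw [QCar.map_mk, QCar.map_mk, QCar.mk_eq_mk_iff] at hxy
  obtain ⟨rfl, x, hx, hxe⟩ := hxy
  have hs : a - b - x ∈ QCar.periodSubgroup N g i :=
    hker i _ (by rw [map_sub, map_sub, hxe, sub_self])
  calc g (QCar.mk i a)
      = g (QCar.mk i (b + x + (a - b - x))) := by congr 2; abel
    _ = g (QCar.mk i (b + x)) := hs _
    _ = g (QCar.mk i b) := by
      congr 1
      exact QCar.mk_eq_mk_iff.mpr ⟨rfl, by simpa using hx⟩

end Map

universe w

theorem stmt18_general {M : Type*} [AddCommGroup M] [Module Λ M] {I : Type*}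
    (N : Submodule Λ M) (m : I → M) (X : I → Submodule Λ ↥N)
    (hm : ∀ i j, m i - m j ∈ N) (h : annCond N X)
    (Sm : Submodule Λ ↥N)
    (hSm : (Sm : Set ↥N) =
      (AddSubgroup.closure (Set.range (fun a : ↥N => (1 - tL ^ 2) • a)
        ∪ {v : ↥N | ∃ i j : I, v = (1 + tL) • (⟨m j - m i, hm j i⟩ : ↥N)}) : Set ↥N))
    (SM : Submodule Λ M) (hSM : SM = Sm.map N.subtype)
    (N' : Submodule Λ (M ⧸ SM)) (hN' : N' = N.map SM.mkQ)
    (r : ↥N →ₗ[Λ] ↥N') (hr : ∀ a : ↥N, (r a).val = SM.mkQ (a : M))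
    (X' : I → Submodule Λ ↥N') (hX' : ∀ i, X' i = (X i).map r)
    (m' : I → M ⧸ SM) (hm'def : ∀ i, m' i = SM.mkQ (m i)) :
    ∃ (hm' : ∀ i j, m' i - m' j ∈ N') (hann' : annCond N' X'),
      (∀ x : QCar N' X', qop N' m' hm' hann' x x = x) ∧
      (∀ y : QCar N' X', Function.Bijective fun x => qop N' m' hm' hann' x y) ∧
      (∀ w x y z : QCar N' X',
        qop N' m' hm' hann' (qop N' m' hm' hann' w x) (qop N' m' hm' hann' y z) =
          qop N' m' hm' hann' (qop N' m' hm' hann' w y) (qop N' m' hm' hann' x z)) ∧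
      (∀ x y : QCar N' X', qop N' m' hm' hann' (qop N' m' hm' hann' x y) y = x) ∧
      ∃ p : QCar N X → QCar N' X',
        (∀ (i : I) (a : ↥N),
          p ⟨i, Submodule.Quotient.mk a⟩ = ⟨i, Submodule.Quotient.mk (r a)⟩) ∧
        Function.Surjective p ∧
        (∀ x y, p (qop N m hm h x y) = qop N' m' hm' hann' (p x) (p y)) ∧
        ∀ (T' : Type w) (qt : QuandleStr T'),
          (∀ a b : T', qt.op (qt.op a b) b = a) →
          ∀ g : QCar N X → T', (∀ x y, g (qop N m hm h x y) = qt.op (g x) (g y)) →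
            ∃ g' : QCar N' X' → T',
              (∀ x y, g' (qop N' m' hm' hann' x y) = qt.op (g' x) (g' y)) ∧
              ∀ x, g x = g' (p x) := by
  subst hSM hN'
  obtain rfl : X' = fun i => (X i).map r := funext hX'
  have hm' : ∀ i j, m' i - m' j ∈ N.map (Sm.map N.subtype).mkQ := fun i j => by
    rw [hm'def, hm'def, ← map_sub]
    exact Submodule.mem_map_of_mem (hm i j)
  have hrm : ∀ i j, r ⟨m j - m i, hm j i⟩ = ⟨m' j - m' i, hm' j i⟩ := fun i j => by
    ext
    rw [hr]
    show (Sm.map N.subtype).mkQ (m j - m i) = m' j - m' i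
    rw [hm'def, hm'def, map_sub]
  have hrs : Function.Surjective r := LinearMap.surjective_of_coe_apply_eq hr
  have hker (s : ↥N) : r s = 0 ↔ s ∈ involutorySubgroup N m hm := by
    rw [LinearMap.eq_zero_iff_of_coe_apply_eq_mkQ hr, ← SetLike.mem_coe, hSm]
    rfl
  have hsq : ∀ c : ↥(N.map (Sm.map N.subtype).mkQ), (1 - tL ^ 2) • c = 0 :=
    hrs.forall.mpr fun a => by
      rw [← map_smul, hker]
      exact AddSubgroup.subset_closure (Or.inl ⟨a, rfl⟩)
  have hdiff : ∀ i j, (1 + tL) • (⟨m' j - m' i, hm' j i⟩ : ↥(N.map _)) = 0 := fun i j => by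
    rw [← hrm, ← map_smul, hker]
    exact AddSubgroup.subset_closure (Or.inr ⟨i, j, rfl⟩)
  have hann' := annCond_map h r
  have hp := QCar.map_qop (fun i => Submodule.le_comap_map r (X i)) h hann' hrm
  refine ⟨hm', hann', qop_self _ _ _ _, qop_left_bijective _ _ _ _, qop_qop_qop_comm _ _ _ _,
    qop_qop_right_of_smul_eq_zero _ _ _ _ hsq hdiff, _, fun _ _ => rfl, QCar.map_surjective _ hrs,
    hp, fun T' qt hinv g hg => ?_⟩
  exact (QCar.map_surjective _ hrs).exists_map_op_eq_op_of_factorsThrough hp hg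
    (QCar.factorsThrough_map fun i s hs =>
      involutorySubgroup_le_periodSubgroup hinv hg i ((hker s).mp hs))

/-- Let `Q = Q(N,(m_i),(X_i))`, let `S` (here `Sm`) be the subgroup
of `N` generated by `(1-t²)·N ∪ {(1+t)·(m_j - m_i)}`, and suppose `S` is a
`Λ`-submodule of `N`. Let `π` be the quotient map `M → M/S` (where `SM` is `S` viewed
as a submodule of `M`), `N' = π(N)`, `r : N → N'` the restriction of `π`,
`X'_i = π(X_i)` and `m'_i = π(m_i)`. Then `Q' = Q(N/S,(π m_i),(π X_i))` is a
well-defined instance of the construction, `Q'` is an involutory medial quandle, the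
induced map `p : Q → Q'` is a surjective quandle homomorphism, and every quandle
homomorphism from `Q` to an involutory quandle factors through `p`; consequently `Q'`
is the involutory quotient `Q_inv` of `Q`. -/
theorem stmt18 {M : Type*} [AddCommGroup M] [Module Λ M] {I : Type*} [Nonempty I]
    (N : Submodule Λ M) (m : I → M) (X : I → Submodule Λ ↥N)
    (hm : ∀ i j, m i - m j ∈ N) (h : annCond N X)
    (Sm : Submodule Λ ↥N)
    (hSm : (Sm : Set ↥N) =
      (AddSubgroup.closure (Set.range (fun a : ↥N => (1 - tL ^ 2) • a)
        ∪ {v : ↥N | ∃ i j : I, v = (1 + tL) • (⟨m j - m i, hm j i⟩ : ↥N)}) : Set ↥N))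
    (SM : Submodule Λ M) (hSM : SM = Sm.map N.subtype)
    (N' : Submodule Λ (M ⧸ SM)) (hN' : N' = N.map SM.mkQ)
    (r : ↥N →ₗ[Λ] ↥N') (hr : ∀ a : ↥N, (r a).val = SM.mkQ (a : M))
    (X' : I → Submodule Λ ↥N') (hX' : ∀ i, X' i = (X i).map r)
    (m' : I → M ⧸ SM) (hm'def : ∀ i, m' i = SM.mkQ (m i)) :
    ∃ (hm' : ∀ i j, m' i - m' j ∈ N') (hann' : annCond N' X'),
      (∀ x : QCar N' X', qop N' m' hm' hann' x x = x) ∧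
      (∀ y : QCar N' X', Function.Bijective fun x => qop N' m' hm' hann' x y) ∧
      (∀ w x y z : QCar N' X',
        qop N' m' hm' hann' (qop N' m' hm' hann' w x) (qop N' m' hm' hann' y z) =
          qop N' m' hm' hann' (qop N' m' hm' hann' w y) (qop N' m' hm' hann' x z)) ∧
      (∀ x y : QCar N' X', qop N' m' hm' hann' (qop N' m' hm' hann' x y) y = x) ∧
      ∃ p : QCar N X → QCar N' X',
        (∀ (i : I) (a : ↥N),
          p ⟨i, Submodule.Quotient.mk a⟩ = ⟨i, Submodule.Quotient.mk (r a)⟩) ∧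
        Function.Surjective p ∧
        (∀ x y, p (qop N m hm h x y) = qop N' m' hm' hann' (p x) (p y)) ∧
        ∀ (T' : Type w) (qt : QuandleStr T'),
          (∀ a b : T', qt.op (qt.op a b) b = a) →
          ∀ g : QCar N X → T', (∀ x y, g (qop N m hm h x y) = qt.op (g x) (g y)) →
            ∃ g' : QCar N' X' → T',
              (∀ x y, g' (qop N' m' hm' hann' x y) = qt.op (g' x) (g' y)) ∧
              ∀ x, g x = g' (p x) :=
  stmt18_general N m X hm h Sm hSm SM hSM N' hN' r hr X' hX' m' hm'def
end
end
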